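/- arXiv:2203.05878 — 4 statements merged into one kernel-verified Lean document; each statement's English description precedes it below -/
import Mathlib

section
/- Let μ > 0, U ≥ 0, β > 1/μ and γ ≥ max(β, βμ) be real numbers, and set η(t) = β/(γ + t) for t ∈ ℕ. Let Δ : ℕ → ℝ and J : ℕ → ℝ be sequences with Δ(t) ≥ 0 and J(t) ≥ 0 for all t, satisfying Δ(t+1) ≤ (1 − η(t)μ)·Δ(t) + η(t)²·U + J(t) for all t ∈ ℕ. Define ν = max( β²U/(βμ − 1), γ·Δ(0) ). Then for every t ∈ ℕ, Δ(t) ≤ ν/(γ + t) + ∑_{j=0}^{t−1} J(j) · ∏_{i=j+1}^{t−1} (1 − η(i)μ). -/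
open Finset

/-- Let `μ > 0`, `U ≥ 0`, `β > 1/μ`, `γ ≥ max(β, βμ)` and `η t = β/(γ + t)`. If the nonnegative
sequences `Δ` and `J` satisfy `Δ (t+1) ≤ (1 - η t * μ) * Δ t + (η t)² * U + J t` for all `t`,
then with `ν = max(β² U/(βμ - 1), γ Δ 0)` we have, for every `t`,
`Δ t ≤ ν/(γ + t) + ∑_{j<t} J j * ∏_{i=j+1}^{t-1} (1 - η i * μ)`. -/
theorem sgd_recursion_bound (μ U β γ : ℝ) (hμ : 0 < μ) (hU : 0 ≤ U)
    (hβ : 1 / μ < β) (hγ : max β (β * μ) ≤ γ)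
    (Δ J : ℕ → ℝ) (hΔ : ∀ t, 0 ≤ Δ t) (hJ : ∀ t, 0 ≤ J t)
    (hrec : ∀ t : ℕ, Δ (t + 1) ≤
      (1 - (β / (γ + t)) * μ) * Δ t + (β / (γ + t)) ^ 2 * U + J t) :
    ∀ t : ℕ, Δ t ≤ max (β ^ 2 * U / (β * μ - 1)) (γ * Δ 0) / (γ + t)
      + ∑ j ∈ Finset.range t, J j * ∏ i ∈ Finset.Ico (j + 1) t, (1 - (β / (γ + i)) * μ) := by
  have hβμ : 1 < β * μ := by
    rw [div_lt_iff₀ hμ] at hβ; linarith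
  have hβpos : 0 < β := by nlinarith
  have hγβμ : β * μ ≤ γ := le_trans (le_max_right _ _) hγ
  have hγpos : 0 < γ := lt_of_lt_of_le (by linarith) hγβμ
  set ν := max (β ^ 2 * U / (β * μ - 1)) (γ * Δ 0) with hνdef
  have hνnn : 0 ≤ ν := le_trans (mul_nonneg hγpos.le (hΔ 0)) (le_max_right _ _)
  have hνU : β ^ 2 * U ≤ ν * (β * μ - 1) := by
    have h := le_max_left (β ^ 2 * U / (β * μ - 1)) (γ * Δ 0)
    rw [div_le_iff₀ (by linarith)] at h
    exact h
  intro t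
  induction t with
  | zero =>
    simp only [Finset.range_zero, Finset.sum_empty, Nat.cast_zero, add_zero]
    rw [le_div_iff₀ hγpos]
    calc Δ 0 * γ = γ * Δ 0 := mul_comm _ _
      _ ≤ ν := le_max_right _ _
  | succ t ih =>
    have hg : 0 < γ + (t : ℝ) := by positivity
    have hgβμ : β * μ ≤ γ + (t : ℝ) := by
      have : (0:ℝ) ≤ t := Nat.cast_nonneg t
      linarith
    have hann : 0 ≤ 1 - β / (γ + (t:ℝ)) * μ := by
      rw [sub_nonneg, div_mul_eq_mul_div, div_le_one hg]
      exact hgβμ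
    have hsum : ∑ j ∈ Finset.range (t+1), J j * ∏ i ∈ Finset.Ico (j+1) (t+1), (1 - (β/(γ+(i:ℝ)))*μ)
        = (1 - β/(γ+(t:ℝ))*μ) * ∑ j ∈ Finset.range t, J j * ∏ i ∈ Finset.Ico (j+1) t, (1 - (β/(γ+(i:ℝ)))*μ) + J t := by
      rw [Finset.sum_range_succ, Finset.Ico_self, Finset.prod_empty, mul_one,
        Finset.mul_sum]
      congr 1
      apply Finset.sum_congr rfl
      intro j hj
      rw [Finset.prod_Ico_succ_top (Nat.succ_le_of_lt (Finset.mem_range.mp hj))]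
      ring
    have key : (1 - β/(γ+(t:ℝ))*μ) * (ν/(γ+(t:ℝ))) + (β/(γ+(t:ℝ)))^2 * U ≤ ν/(γ+(t:ℝ)+1) := by
      have heq : (1 - β/(γ+(t:ℝ))*μ) * (ν/(γ+(t:ℝ))) + (β/(γ+(t:ℝ)))^2 * U
          = (ν * ((γ+(t:ℝ)) - β*μ) + β^2*U) / (γ+(t:ℝ))^2 := by
        field_simp
      rw [heq, div_le_div_iff₀ (by positivity) (by linarith)]
      nlinarith [mul_le_mul_of_nonneg_right hνU hg.le, mul_nonneg hνnn hg.le]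
    calc Δ (t+1) ≤ (1 - β/(γ+(t:ℝ))*μ) * Δ t + (β/(γ+(t:ℝ)))^2 * U + J t := hrec t
      _ ≤ (1 - β/(γ+(t:ℝ))*μ) * (ν/(γ+(t:ℝ)) + ∑ j ∈ Finset.range t, J j * ∏ i ∈ Finset.Ico (j+1) t, (1 - (β/(γ+(i:ℝ)))*μ)) + (β/(γ+(t:ℝ)))^2 * U + J t := by
          have := mul_le_mul_of_nonneg_left ih hann
          linarith
      _ = ((1 - β/(γ+(t:ℝ))*μ) * (ν/(γ+(t:ℝ))) + (β/(γ+(t:ℝ)))^2 * U)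
          + ((1 - β/(γ+(t:ℝ))*μ) * (∑ j ∈ Finset.range t, J j * ∏ i ∈ Finset.Ico (j+1) t, (1 - (β/(γ+(i:ℝ)))*μ)) + J t) := by ring
      _ ≤ ν/(γ+(t:ℝ)+1)
          + ((1 - β/(γ+(t:ℝ))*μ) * (∑ j ∈ Finset.range t, J j * ∏ i ∈ Finset.Ico (j+1) t, (1 - (β/(γ+(i:ℝ)))*μ)) + J t) := by
          linarith [key]
      _ = ν/(γ+((t:ℕ)+1:ℕ)) + ∑ j ∈ Finset.range (t+1), J j * ∏ i ∈ Finset.Ico (j+1) (t+1), (1 - (β/(γ+(i:ℝ)))*μ) := by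
          rw [hsum]; push_cast; ring
end

section
/- Let μ > 0, U ≥ 0 and γ ≥ max(2, 2/μ) be real numbers, and set η(t) = 2/(μ(γ + t)) for t ∈ ℕ. Let Δ : ℕ → ℝ and J : ℕ → ℝ be sequences with Δ(t) ≥ 0 and J(t) ≥ 0 for all t, satisfying Δ(t+1) ≤ (1 − η(t)μ)·Δ(t) + η(t)²·U + J(t) for all t ∈ ℕ. Then for every T ∈ ℕ, Δ(T) ≤ (1/(γ + T))·( 4U/μ² + γ·Δ(0) ) + ∑_{j=0}^{T−1} J(j) · ∏_{i=j+1}^{T−1} (1 − 2/(γ + i)). -/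
open Finset

/-- Let `μ > 0`, `U ≥ 0`, `γ ≥ max(2, 2/μ)` and `η t = 2/(μ(γ + t))`. If the nonnegative
sequences `Δ` and `J` satisfy `Δ (t+1) ≤ (1 - η t * μ) * Δ t + (η t)² * U + J t` for all `t`,
then for every `T`,
`Δ T ≤ (1/(γ + T)) (4U/μ² + γ Δ 0) + ∑_{j<T} J j * ∏_{i=j+1}^{T-1} (1 - 2/(γ + i))`. -/
theorem sgd_recursion_bound_diminishing (μ U γ : ℝ) (hμ : 0 < μ) (hU : 0 ≤ U)
    (hγ : max 2 (2 / μ) ≤ γ)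
    (Δ J : ℕ → ℝ) (hΔ : ∀ t, 0 ≤ Δ t) (hJ : ∀ t, 0 ≤ J t)
    (hrec : ∀ t : ℕ, Δ (t + 1) ≤
      (1 - (2 / (μ * (γ + t))) * μ) * Δ t + (2 / (μ * (γ + t))) ^ 2 * U + J t) :
    ∀ T : ℕ, Δ T ≤ (1 / (γ + T)) * (4 * U / μ ^ 2 + γ * Δ 0)
      + ∑ j ∈ Finset.range T, J j * ∏ i ∈ Finset.Ico (j + 1) T, (1 - 2 / (γ + i)) := by
  have hγ2 : (2:ℝ) ≤ γ := le_trans (le_max_left _ _) hγ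
  have hγpos : (0:ℝ) < γ := by linarith
  have hμ2 : (0:ℝ) < μ ^ 2 := by positivity
  have hCge : 4 * U / μ ^ 2 ≤ 4 * U / μ ^ 2 + γ * Δ 0 := by
    nlinarith [hΔ 0, mul_nonneg hγpos.le (hΔ 0)]
  have h4U : 4 * U ≤ μ ^ 2 * (4 * U / μ ^ 2 + γ * Δ 0) := by
    have := (div_le_iff₀ hμ2).mp hCge
    linarith
  intro T
  induction T with
  | zero =>
    simp only [Nat.cast_zero, add_zero, Finset.range_zero, Finset.sum_empty]
    have h1 : 1 / γ * (4 * U / μ ^ 2 + γ * Δ 0) = 4 * U / μ ^ 2 / γ + Δ 0 := by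
      field_simp
    rw [h1]
    have : 0 ≤ 4 * U / μ ^ 2 / γ := by positivity
    linarith
  | succ T ih =>
    have hT : (0:ℝ) ≤ (T:ℝ) := Nat.cast_nonneg T
    have h2 : (2:ℝ) ≤ γ + T := by linarith
    have hpos : (0:ℝ) < γ + T := by linarith
    have hpos1 : (0:ℝ) < γ + T + 1 := by linarith
    have hfac0 : (0:ℝ) ≤ 1 - 2 / (γ + T) := by
      rw [sub_nonneg, div_le_one hpos]; linarith
    set C := 4 * U / μ ^ 2 + γ * Δ 0 with hC
    set S := ∑ j ∈ Finset.range T, J j * ∏ i ∈ Finset.Ico (j + 1) T, (1 - 2 / (γ + i)) with hS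
    have hrec' : Δ (T + 1) ≤ (1 - 2 / (γ + T)) * Δ T + 4 * U / (μ ^ 2 * (γ + T) ^ 2) + J T := by
      have h := hrec T
      have h1 : (2 / (μ * (γ + (T:ℝ)))) * μ = 2 / (γ + T) := by
        field_simp
      have h2' : (2 / (μ * (γ + (T:ℝ)))) ^ 2 * U = 4 * U / (μ ^ 2 * (γ + T) ^ 2) := by
        field_simp
        ring
      rw [h1, h2'] at h
      exact h
    have hsum : ∑ j ∈ Finset.range (T + 1), J j * ∏ i ∈ Finset.Ico (j + 1) (T + 1), (1 - 2 / (γ + i))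
        = (1 - 2 / (γ + T)) * S + J T := by
      rw [hS, Finset.sum_range_succ, Finset.mul_sum]
      congr 1
      · apply Finset.sum_congr rfl
        intro j hj
        rw [Finset.prod_Ico_succ_top (Nat.succ_le_of_lt (Finset.mem_range.mp hj))]
        ring
      · simp
    have hdrift : (1 - 2 / (γ + T)) * (1 / (γ + T) * C) + 4 * U / (μ ^ 2 * (γ + T) ^ 2)
        ≤ 1 / (γ + T + 1) * C := by
      have heq : (1 - 2 / (γ + T)) * (1 / (γ + T) * C) + 4 * U / (μ ^ 2 * (γ + T) ^ 2)
          = ((γ + T - 2) * C * μ ^ 2 + 4 * U) / (μ ^ 2 * (γ + T) ^ 2) := by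
        field_simp
      rw [heq, one_div, inv_mul_eq_div, div_le_div_iff₀ (by positivity) hpos1]
      nlinarith [h4U, mul_nonneg hU hT, mul_nonneg hU hpos.le]
    have hmul := mul_le_mul_of_nonneg_left ih hfac0
    calc Δ (T + 1) ≤ (1 - 2 / (γ + T)) * Δ T + 4 * U / (μ ^ 2 * (γ + T) ^ 2) + J T := hrec'
      _ ≤ (1 - 2 / (γ + T)) * (1 / (γ + T) * C + S) + 4 * U / (μ ^ 2 * (γ + T) ^ 2) + J T := by
          linarith [hmul]
      _ = ((1 - 2 / (γ + T)) * (1 / (γ + T) * C) + 4 * U / (μ ^ 2 * (γ + T) ^ 2))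
            + ((1 - 2 / (γ + T)) * S + J T) := by ring
      _ ≤ 1 / (γ + T + 1) * C + ((1 - 2 / (γ + T)) * S + J T) := by linarith
      _ = 1 / (γ + ((T:ℕ) + 1 : ℕ)) * C
            + ∑ j ∈ Finset.range (T + 1), J j * ∏ i ∈ Finset.Ico (j + 1) (T + 1), (1 - 2 / (γ + i)) := by
          rw [hsum]; push_cast; ring
end

section
/- The function h(x) = 1/(2^x − 1)² is convex on the interval (0, ∞). (This is the convexity in the number of quantization bits B of the per-user quantization error term δ²/(2^B − 1)², which underlies the convexity of the quantization error tolerance constraint C₃.) -/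
/-!
The function is log-convex. Indeed, for `b > 1` and `x > 0`,
`log (b ^ x - 1) = x * log b + log (1 - b⁻¹ ^ x)` is concave: the first term is linear and the
second is the increasing concave function `log` applied to the concave function `1 - b⁻¹ ^ x`.
Hence `(b ^ x - 1) ^ (-p) = exp (-p * log (b ^ x - 1))` is convex for every `p ≥ 0`, as the
increasing convex function `exp` applied to a convex function; the theorem is the case
`b = p = 2`.
-/

open Real Set

section Composition

variable {𝕜 E β γ : Type*} [Semiring 𝕜] [PartialOrder 𝕜] [AddCommMonoid E] [SMul 𝕜 E]
  [AddCommMonoid β] [PartialOrder β] [SMul 𝕜 β] [AddCommMonoid γ] [PartialOrder γ] [SMul 𝕜 γ]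
  {s : Set E} {t : Set β} {f : E → β} {g : β → γ}

theorem ConvexOn.comp_of_mapsTo (hg : ConvexOn 𝕜 t g) (hf : ConvexOn 𝕜 s f)
    (hg' : MonotoneOn g t) (hst : MapsTo f s t) : ConvexOn 𝕜 s (g ∘ f) :=
  ⟨hf.1, fun _ hx _ hy _ _ ha hb hab =>
    (hg' (hst <| hf.1 hx hy ha hb hab) (hg.1 (hst hx) (hst hy) ha hb hab)
      (hf.2 hx hy ha hb hab)).trans (hg.2 (hst hx) (hst hy) ha hb hab)⟩

theorem ConcaveOn.comp_of_mapsTo (hg : ConcaveOn 𝕜 t g) (hf : ConcaveOn 𝕜 s f)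
    (hg' : MonotoneOn g t) (hst : MapsTo f s t) : ConcaveOn 𝕜 s (g ∘ f) :=
  ⟨hf.1, fun _ hx _ hy _ _ ha hb hab =>
    (hg.2 (hst hx) (hst hy) ha hb hab).trans
      (hg' (hg.1 (hst hx) (hst hy) ha hb hab) (hst <| hf.1 hx hy ha hb hab)
        (hf.2 hx hy ha hb hab))⟩

end Composition

lemma concaveOn_log_one_sub_inv_rpow {b : ℝ} (hb : 1 < b) :
    ConcaveOn ℝ (Ioi 0) fun x : ℝ => log (1 - b⁻¹ ^ x) := by
  have hinner : ConcaveOn ℝ (Ioi 0) fun x : ℝ => 1 - b⁻¹ ^ x :=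
    (concaveOn_const 1 (convex_Ioi 0)).sub
      ((convexOn_rpow_left (inv_pos.2 (by linarith))).subset (subset_univ _) (convex_Ioi 0))
  have hmaps : MapsTo (fun x : ℝ => 1 - b⁻¹ ^ x) (Ioi 0) (Ioi 0) := fun x hx =>
    sub_pos.2 (rpow_lt_one (by positivity) (inv_lt_one_of_one_lt₀ hb) hx)
  exact strictConcaveOn_log_Ioi.concaveOn.comp_of_mapsTo hinner strictMonoOn_log.monotoneOn hmaps

lemma concaveOn_log_rpow_sub_one {b : ℝ} (hb : 1 < b) :
    ConcaveOn ℝ (Ioi 0) fun x : ℝ => log (b ^ x - 1) := by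
  refine (((concaveOn_id (convex_Ioi 0)).smul (log_pos hb).le).add
    (concaveOn_log_one_sub_inv_rpow hb)).congr fun x hx => ?_
  have hbx : 0 < b ^ x := rpow_pos_of_pos (by linarith) x
  have h1 : b⁻¹ ^ x < 1 := rpow_lt_one (by positivity) (inv_lt_one_of_one_lt₀ hb) hx
  have hsplit : b ^ x - 1 = b ^ x * (1 - b⁻¹ ^ x) := by
    rw [inv_rpow (by linarith), mul_sub, mul_inv_cancel₀ hbx.ne']; ring
  simp only [Pi.add_apply, id, smul_eq_mul]
  rw [hsplit, log_mul hbx.ne' (by linarith), log_rpow (by linarith), mul_comm]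

theorem convexOn_rpow_sub_one_rpow_neg {b p : ℝ} (hb : 1 < b) (hp : 0 ≤ p) :
    ConvexOn ℝ (Ioi 0) fun x : ℝ => (b ^ x - 1) ^ (-p) := by
  have hlog : ConvexOn ℝ (Ioi 0) fun x : ℝ => log (b ^ x - 1) * -p := by
    refine ((concaveOn_log_rpow_sub_one hb).smul hp).neg.congr fun x _ => ?_
    simp only [Pi.neg_apply, smul_eq_mul]
    ring
  refine (convexOn_exp.comp_of_mapsTo hlog (Real.exp_monotone.monotoneOn _)
    (mapsTo_univ _ _)).congr fun x hx => ?_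
  exact (rpow_def_of_pos (sub_pos.2 (one_lt_rpow hb hx)) _).symm

/-- The function `h(x) = 1/(2^x - 1)²` is convex on `(0, ∞)`. -/
theorem quantization_error_convex :
    ConvexOn ℝ (Set.Ioi (0 : ℝ)) (fun x : ℝ => 1 / ((2 : ℝ) ^ x - 1) ^ 2) := by
  refine (convexOn_rpow_sub_one_rpow_neg one_lt_two zero_le_two).congr fun x hx => ?_
  have hbase : 0 ≤ (2 : ℝ) ^ x - 1 := sub_nonneg.2 (one_le_rpow one_le_two (le_of_lt hx))
  simp only [rpow_neg hbase, rpow_two, one_div]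
end

section
/- Consider the per-round convergence-time problem. (i) Every feasible point satisfies l^c ≥ a₁ := max_{n} τ·cₙ·Dₙ/fₙᵐᵃˣ. (ii) If (l^c, E, B, f, l^up) is feasible, then the point (l^c, E, B, f', l^up) with f'ₙ = τ·cₙ·Dₙ/l^c for every n is also feasible and has the same objective value l^c + ∑ₙ lₙᵘᵖ. Hence there always exists an optimal solution with fₙ = τ·cₙ·Dₙ/l^c for all n (Proposition 1). -/
open Finset

/-- Constants of the per-round convergence-time problem for `N` users. -/
structure FLParams (N : ℕ) where
  /-- bandwidth `W` -/
  W : ℝ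
  /-- noise power `N₀` -/
  N0 : ℝ
  /-- hardware constant `ζ` -/
  ζ : ℝ
  /-- number of local SGD steps `τ` -/
  τ : ℝ
  /-- model dimension `d` -/
  d : ℝ
  /-- header size `m` -/
  m : ℝ
  /-- quantization error tolerance `ε` -/
  ε : ℝ
  /-- channel gains `gₙ` -/
  g : Fin N → ℝ
  /-- energy budgets `Eₙᵐᵃˣ` -/
  Emax : Fin N → ℝ
  /-- CPU cycles per sample `cₙ` -/
  c : Fin N → ℝ
  /-- mini-batch sizes `Dₙ` -/
  D : Fin N → ℝ
  /-- maximum CPU frequencies `fₙᵐᵃˣ` -/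
  fmax : Fin N → ℝ
  /-- dataset weights `pₙ` -/
  p : Fin N → ℝ
  /-- quantization constants `δₙ` -/
  δ : Fin N → ℝ

/-- The standing assumptions on the constants. -/
def FLParams.Valid {N : ℕ} (P : FLParams N) : Prop :=
  0 < P.W ∧ 0 < P.N0 ∧ 0 < P.ζ ∧ 1 ≤ P.τ ∧ 1 ≤ P.d ∧ 0 ≤ P.m ∧ 0 < P.ε ∧
  (∀ n, 0 < P.g n) ∧ (∀ n, 0 < P.Emax n) ∧ (∀ n, 0 < P.c n) ∧ (∀ n, 0 < P.D n) ∧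
  (∀ n, 0 < P.fmax n) ∧ (∀ n, 0 ≤ P.p n) ∧ (∑ n, P.p n) = 1 ∧ (∀ n, 0 ≤ P.δ n)

/-- Feasibility of a point `(l^c, E, B, f, l^up)` for the per-round convergence-time problem:
positivity, and constraints C1 (rate), C2 (energy), C3 (quantization error tolerance),
C4 (computation duration), C5 (max CPU frequency). -/
def Feasible {N : ℕ} (P : FLParams N) (lc : ℝ) (E B f lup : Fin N → ℝ) : Prop :=
  0 < lc ∧ (∀ n, 0 ≤ E n) ∧ (∀ n, 1 ≤ B n) ∧ (∀ n, 0 < f n) ∧ (∀ n, 0 < lup n) ∧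
  (∀ n, P.d * (B n + 1) + P.m ≤
    lup n * P.W * Real.logb 2 (1 + P.g n * E n / (lup n * P.W * P.N0))) ∧
  (∀ n, P.τ * P.ζ * P.c n * P.D n * (f n) ^ 2 + E n ≤ P.Emax n) ∧
  (∑ n, P.p n * (P.δ n) ^ 2 / ((2 : ℝ) ^ (B n) - 1) ^ 2 ≤ P.ε) ∧
  (∀ n, P.τ * P.c n * P.D n / f n ≤ lc) ∧
  (∀ n, f n ≤ P.fmax n)

/-- Proposition 1. (i) Every feasible point satisfies `l^c ≥ a₁ = maxₙ τ cₙ Dₙ / fₙᵐᵃˣ`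
(i.e. `l^c` dominates each `τ cₙ Dₙ / fₙᵐᵃˣ`). (ii) Replacing the CPU frequencies by
`f'ₙ = τ cₙ Dₙ / l^c` preserves feasibility (and the objective `l^c + ∑ₙ lₙᵘᵖ` is unchanged).
Hence (iii) whenever a feasible point is optimal, the point with `fₙ = τ cₙ Dₙ / l^c`
is also feasible and optimal. -/
theorem proposition1 {N : ℕ} (P : FLParams N) (hP : P.Valid) :
    (∀ lc E B f lup, Feasible P lc E B f lup →
      ∀ n, P.τ * P.c n * P.D n / P.fmax n ≤ lc) ∧
    (∀ lc E B f lup, Feasible P lc E B f lup →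
      Feasible P lc E B (fun n => P.τ * P.c n * P.D n / lc) lup) ∧
    (∀ lc E B f lup, Feasible P lc E B f lup →
      (∀ lc' E' B' f' lup', Feasible P lc' E' B' f' lup' →
        lc + ∑ n, lup n ≤ lc' + ∑ n, lup' n) →
      Feasible P lc E B (fun n => P.τ * P.c n * P.D n / lc) lup ∧
      (∀ lc' E' B' f' lup', Feasible P lc' E' B' f' lup' →
        lc + ∑ n, lup n ≤ lc' + ∑ n, lup' n)) := by

  obtain ⟨hW, hN0, hζ, hτ, hd, hm, hε, hg, hEmax, hc, hD, hfmax, hp, hpsum, hδ⟩ := hP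
  have hτpos : 0 < P.τ := lt_of_lt_of_le one_pos hτ
  have key2 : ∀ lc E B f lup, Feasible P lc E B f lup →
      Feasible P lc E B (fun n => P.τ * P.c n * P.D n / lc) lup := by
    intro lc E B f lup hF
    obtain ⟨hlc, hE, hB, hf, hlup, hC1, hC2, hC3, hC4, hC5⟩ := hF
    have hnum : ∀ n, 0 < P.τ * P.c n * P.D n := fun n =>
      mul_pos (mul_pos hτpos (hc n)) (hD n)
    have hf' : ∀ n, 0 < P.τ * P.c n * P.D n / lc := fun n =>
      div_pos (hnum n) hlc
    have hle : ∀ n, P.τ * P.c n * P.D n / lc ≤ f n := by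
      intro n
      rw [div_le_iff₀ hlc]
      have := hC4 n
      rw [div_le_iff₀ (hf n)] at this
      linarith
    refine ⟨hlc, hE, hB, hf', hlup, hC1, ?_, hC3, ?_, fun n => le_trans (hle n) (hC5 n)⟩
    · intro n
      have hsq : (P.τ * P.c n * P.D n / lc) ^ 2 ≤ (f n) ^ 2 :=
        pow_le_pow_left₀ (le_of_lt (hf' n)) (hle n) 2
      have hcoef : 0 ≤ P.τ * P.ζ * P.c n * P.D n :=
        le_of_lt (mul_pos (mul_pos (mul_pos hτpos hζ) (hc n)) (hD n))
      have := hC2 n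
      nlinarith [mul_le_mul_of_nonneg_left hsq hcoef]
    · intro n
      simp only
      have : P.τ * P.c n * P.D n / (P.τ * P.c n * P.D n / lc) = lc := by
        rw [div_div_eq_mul_div, mul_comm, mul_div_assoc, div_self (ne_of_gt (hnum n)), mul_one]
      rw [this]
  refine ⟨?_, key2, fun lc E B f lup hF hopt => ⟨key2 _ _ _ _ _ hF, hopt⟩⟩
  intro lc E B f lup hF n
  obtain ⟨hlc, hE, hB, hf, hlup, hC1, hC2, hC3, hC4, hC5⟩ := hF
  calc P.τ * P.c n * P.D n / P.fmax n ≤ P.τ * P.c n * P.D n / f n := by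
        exact div_le_div_of_nonneg_left
          (le_of_lt (mul_pos (mul_pos hτpos (hc n)) (hD n))) (hf n) (hC5 n)
    _ ≤ lc := hC4 n
end
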